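/- arXiv:2604.19555 — 2 statements merged into one kernel-verified Lean document; each statement's English description precedes it below -/
import Mathlib

section
/- For any dyadic cell Q of level ℓ in ℝ^d, the support extension of the parent of Q equals the union of the neighborhoods N_{Q*} over all level-ℓ cells Q* contained in the support extension Q̂ of Q. -/
noncomputable section

/-- The dyadic cell of level `ℓ` with index `m` in `ℝ^d`:
the hypercube `∏ᵢ [mᵢ/2^ℓ, (mᵢ+1)/2^ℓ]`. -/
def dyadicCell (d : ℕ) (ℓ : ℤ) (m : Fin d → ℤ) : Set (Fin d → ℝ) :=
  Set.univ.pi fun i => Set.Icc ((m i : ℝ) / 2 ^ ℓ) (((m i : ℝ) + 1) / 2 ^ ℓ)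

/-- The support of the tensor-product B-spline of degree `p`, level `ℓ`, index `k`:
the hypercube `∏ᵢ [kᵢ/2^ℓ, (kᵢ+p+1)/2^ℓ]`. -/
def bsupp (d p : ℕ) (ℓ : ℤ) (k : Fin d → ℤ) : Set (Fin d → ℝ) :=
  Set.univ.pi fun i => Set.Icc ((k i : ℝ) / 2 ^ ℓ) (((k i : ℝ) + p + 1) / 2 ^ ℓ)

/-- The support extension `Q̂` of the level-`ℓ` cell of index `m`:
the cube of `(2p+1)^d` level-`ℓ` cells centered at the cell. -/
def hatQ (d p : ℕ) (ℓ : ℤ) (m : Fin d → ℤ) : Set (Fin d → ℝ) :=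
  Set.univ.pi fun i => Set.Icc (((m i : ℝ) - p) / 2 ^ ℓ) (((m i : ℝ) + p + 1) / 2 ^ ℓ)

/-- The neighborhood `N_Q` of the level-`ℓ` cell of index `m`: the union of the
level-`(ℓ-1)` parents of all level-`ℓ` cells contained in the support extension `Q̂`. -/
def NQ (d p : ℕ) (ℓ : ℤ) (m : Fin d → ℤ) : Set (Fin d → ℝ) :=
  ⋃ m' ∈ {m' : Fin d → ℤ | dyadicCell d ℓ m' ⊆ hatQ d p ℓ m},
    dyadicCell d (ℓ - 1) fun i => Int.ediv (m' i) 2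

lemma two_zpow_pos (ℓ : ℤ) : (0:ℝ) < 2 ^ ℓ := by positivity

lemma cell_subset_iff (d p : ℕ) (ℓ : ℤ) (m m' : Fin d → ℤ) :
    dyadicCell d ℓ m' ⊆ hatQ d p ℓ m ↔ ∀ i, m i - p ≤ m' i ∧ m' i ≤ m i + p := by
  have hpos := two_zpow_pos ℓ
  unfold dyadicCell hatQ
  rw [Set.univ_pi_subset_univ_pi_iff]
  constructor
  · rintro (h | ⟨i, hi⟩)
    · intro i
      obtain ⟨h1, h2⟩ := (Set.Icc_subset_Icc_iff (by gcongr <;> linarith)).mp (h i)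
      rw [div_le_div_iff_of_pos_right hpos] at h1 h2
      constructor
      · have : (↑(m i) - (p:ℝ)) ≤ (m' i : ℝ) := h1
        exact_mod_cast this
      · have h3 : (m' i : ℝ) ≤ (m i : ℝ) + p := by linarith
        exact_mod_cast h3
    · exfalso
      rw [Set.Icc_eq_empty_iff] at hi
      exact hi (by gcongr <;> linarith)
  · intro h
    left
    intro i
    apply Set.Icc_subset_Icc <;> rw [div_le_div_iff_of_pos_right hpos]
    · have h1 : ((m i - p : ℤ) : ℝ) ≤ (m' i : ℝ) := by exact_mod_cast (h i).1
      push_cast at h1; linarith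
    · have h2 : (m' i : ℝ) ≤ ((m i + p : ℤ) : ℝ) := by exact_mod_cast (h i).2
      push_cast at h2; linarith

lemma mem_hatQ_iff (d p : ℕ) (L : ℤ) (q : Fin d → ℤ) (x : Fin d → ℝ) :
    x ∈ hatQ d p L q ↔ ∀ i, ((q i : ℝ) - p) / 2 ^ L ≤ x i ∧ x i ≤ ((q i : ℝ) + p + 1) / 2 ^ L := by
  simp only [hatQ, Set.mem_pi, Set.mem_univ, forall_true_left, Set.mem_Icc, true_implies]

lemma mem_cell_iff (d : ℕ) (L : ℤ) (q : Fin d → ℤ) (x : Fin d → ℝ) :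
    x ∈ dyadicCell d L q ↔ ∀ i, (q i : ℝ) / 2 ^ L ≤ x i ∧ x i ≤ ((q i : ℝ) + 1) / 2 ^ L := by
  simp only [dyadicCell, Set.mem_pi, Set.mem_univ, forall_true_left, Set.mem_Icc, true_implies]

lemma clamp_mem (c : ℝ) (hc : 0 < c) (a b : ℤ) (x : ℝ) (hab : a ≤ b)
    (h1 : (a:ℝ)/c ≤ x) (h2 : x ≤ ((b:ℝ)+1)/c) :
    ∃ j : ℤ, a ≤ j ∧ j ≤ b ∧ (j:ℝ)/c ≤ x ∧ x ≤ ((j:ℝ)+1)/c := by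
  set j0 := ⌊c * x⌋ with hj0
  have hfl : (j0 : ℝ) ≤ c * x := Int.floor_le _
  have hfu : c * x < (j0 : ℝ) + 1 := Int.lt_floor_add_one _
  have ha' : (a:ℝ) ≤ c * x := by rw [div_le_iff₀ hc] at h1; linarith [mul_comm x c]
  have hb' : c * x ≤ (b:ℝ) + 1 := by rw [le_div_iff₀ hc] at h2; linarith [mul_comm x c]
  rcases lt_or_ge j0 a with h | h
  · refine ⟨a, le_refl a, hab, h1, ?_⟩
    have : (j0 : ℝ) + 1 ≤ (a : ℝ) := by exact_mod_cast h
    rw [le_div_iff₀ hc]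
    linarith [mul_comm x c]
  · rcases le_or_gt j0 b with hb | hb
    · refine ⟨j0, h, hb, ?_, ?_⟩
      · rw [div_le_iff₀ hc]; linarith [mul_comm x c]
      · rw [le_div_iff₀ hc]; linarith [mul_comm x c]
    · refine ⟨b, hab, le_refl b, ?_, h2⟩
      have : (b : ℝ) + 1 ≤ (j0 : ℝ) := by exact_mod_cast hb
      rw [div_le_iff₀ hc]
      linarith [mul_comm x c]

/-- For any dyadic cell `Q` of level `ℓ` in `ℝ^d`, the support extension
of the parent of `Q` equals the union of the neighborhoods `N_{Q*}` over all level-`ℓ`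
cells `Q*` contained in the support extension `Q̂` of `Q`. -/
theorem hat_parent_eq_union_NQ (d p : ℕ) (hp : 1 ≤ p) (ℓ : ℤ) (hℓ : 1 ≤ ℓ)
    (m : Fin d → ℤ) :
    hatQ d p (ℓ - 1) (fun i => Int.ediv (m i) 2) =
      ⋃ m' ∈ {m' : Fin d → ℤ | dyadicCell d ℓ m' ⊆ hatQ d p ℓ m}, NQ d p ℓ m' := by
  have hpos := two_zpow_pos (ℓ - 1)
  ext x
  simp only [NQ, Set.mem_iUnion, Set.mem_setOf_eq, exists_prop, cell_subset_iff,
    mem_hatQ_iff, mem_cell_iff]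
  constructor
  · -- LHS ⊆ RHS
    intro hx
    have hclamp : ∀ i, ∃ j : ℤ, Int.ediv (m i) 2 - p ≤ j ∧ j ≤ Int.ediv (m i) 2 + p ∧
        (j:ℝ)/2^(ℓ-1) ≤ x i ∧ x i ≤ ((j:ℝ)+1)/2^(ℓ-1) := by
      intro i
      have h1' : ((Int.ediv (m i) 2 - p : ℤ):ℝ)/2^(ℓ-1) ≤ x i := by
        push_cast; exact (hx i).1
      have h2' : x i ≤ (((Int.ediv (m i) 2 + p : ℤ):ℝ)+1)/2^(ℓ-1) := by
        push_cast
        exact (hx i).2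
      exact clamp_mem _ hpos _ _ _ (by omega) h1' h2'
    choose j hj1 hj2 hj3 hj4 using hclamp
    set m'' : Fin d → ℤ := fun i => if m i - 2*p ≤ 2 * j i then 2 * j i else 2 * j i + 1
      with hm''def
    have hm''eq : ∀ i, m'' i = if m i - 2*p ≤ 2 * j i then 2 * j i else 2 * j i + 1 :=
      fun i => rfl
    have hediv : ∀ i, Int.ediv (m'' i) 2 = j i := by
      intro i
      have h1 := hj1 i; have h2 := hj2 i
      have hq1 : Int.ediv (m i) 2 = m i / 2 := rfl
      rw [hq1] at h1 h2
      rw [hm''eq i]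
      show (if m i - 2*(p:ℤ) ≤ 2 * j i then 2 * j i else 2 * j i + 1) / 2 = j i
      split_ifs <;> omega
    have hrange : ∀ i, m i - 2*(p:ℤ) ≤ m'' i ∧ m'' i ≤ m i + 2*p := by
      intro i
      have h1 := hj1 i; have h2 := hj2 i
      have hq1 : Int.ediv (m i) 2 = m i / 2 := rfl
      rw [hq1] at h1 h2
      rw [hm''eq i]
      split_ifs <;> constructor <;> omega
    refine ⟨fun i => max (m i - p) (min (m i + p) (m'' i)), fun i => ?_, m'', fun i => ?_,
      fun i => ?_⟩
    · dsimp only; have := hrange i; omega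
    · dsimp only; have := hrange i; omega
    · rw [hediv i]
      exact ⟨hj3 i, hj4 i⟩
  · -- RHS ⊆ LHS
    rintro ⟨m', hm', m'', hm'', hx⟩
    intro i
    have h1 := (hm' i).1
    have h2 := (hm' i).2
    have h3 := (hm'' i).1
    have h4 := (hm'' i).2
    have hq : Int.ediv (m i) 2 - p ≤ Int.ediv (m'' i) 2 ∧
        Int.ediv (m'' i) 2 ≤ Int.ediv (m i) 2 + p := by
      show m i / 2 - (p:ℤ) ≤ m'' i / 2 ∧ m'' i / 2 ≤ m i / 2 + p
      omega
    obtain ⟨hx1, hx2⟩ := hx i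
    have hA : ((Int.ediv (m i) 2 : ℝ) - p) ≤ (Int.ediv (m'' i) 2 : ℝ) := by
      exact_mod_cast hq.1
    have hB : ((Int.ediv (m'' i) 2 : ℝ) + 1) ≤ (Int.ediv (m i) 2 : ℝ) + p + 1 := by
      have : (Int.ediv (m'' i) 2 : ℝ) ≤ (Int.ediv (m i) 2 : ℝ) + p := by exact_mod_cast hq.2
      linarith
    exact ⟨le_trans ((div_le_div_iff_of_pos_right hpos).mpr hA) hx1,
      le_trans hx2 ((div_le_div_iff_of_pos_right hpos).mpr hB)⟩
end
end

section
/- A hierarchical mesh is weakly admissible (ω_ℓ ⊆ ω_{ℓ−1} for all ℓ = 1,…,n−1) if and only if for every level-ℓ cell Q with Q ⊆ ω_ℓ one has N_{parent(Q)} ∩ Ω₀ ⊆ Ω_{ℓ−1}. -/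
noncomputable section

/-- The unit cube `Ω₀ = [0,1]^d`. -/
def unitCube (d : ℕ) : Set (Fin d → ℝ) :=
  Set.univ.pi fun _ => Set.Icc (0 : ℝ) 1

/-- `ω_ℓ`: the union of the level-`ℓ` cells of the mesh of `Ω 0` whose local
support extension `Q̃ = Q̂ ∩ Ω 0` is contained in `Ω ℓ`. -/
def omegaSet (d p : ℕ) (Ω : ℕ → Set (Fin d → ℝ)) (ℓ : ℕ) : Set (Fin d → ℝ) :=
  ⋃ m ∈ {m : Fin d → ℤ | dyadicCell d (ℓ : ℤ) m ⊆ Ω 0 ∧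
      hatQ d p (ℓ : ℤ) m ∩ Ω 0 ⊆ Ω ℓ},
    dyadicCell d (ℓ : ℤ) m


lemma div_le_div_pow {u v : ℝ} (ℓ : ℤ) : u / 2 ^ ℓ ≤ v / 2 ^ ℓ ↔ u ≤ v :=
  div_le_div_iff_of_pos_right (two_zpow_pos ℓ)

lemma zpow_succ_real (ℓ : ℤ) : (2:ℝ) ^ ℓ = 2 * 2 ^ (ℓ - 1) := by
  have h := zpow_add_one₀ (by norm_num : (2:ℝ) ≠ 0) (ℓ - 1)
  rw [sub_add_cancel] at h
  rw [h]; ring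

/-- move from level ℓ-1 to level ℓ: c / 2^(ℓ-1) = 2c / 2^ℓ -/
lemma div_pred_level (c : ℝ) (ℓ : ℤ) : c / 2 ^ (ℓ - 1) = (2 * c) / 2 ^ ℓ := by
  rw [zpow_succ_real ℓ]
  rw [mul_comm (2:ℝ) (2 ^ (ℓ-1)), ← div_div]
  ring_nf

lemma mem_cell {d : ℕ} {ℓ : ℤ} {m : Fin d → ℤ} {x : Fin d → ℝ} :
    x ∈ dyadicCell d ℓ m ↔ ∀ i, (m i : ℝ) / 2 ^ ℓ ≤ x i ∧ x i ≤ ((m i : ℝ) + 1) / 2 ^ ℓ := by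
  simp only [dyadicCell, Set.mem_univ_pi, Set.mem_Icc]

lemma mem_hatQ {d p : ℕ} {ℓ : ℤ} {k : Fin d → ℤ} {x : Fin d → ℝ} :
    x ∈ hatQ d p ℓ k ↔ ∀ i, ((k i : ℝ) - p) / 2 ^ ℓ ≤ x i ∧ x i ≤ ((k i : ℝ) + p + 1) / 2 ^ ℓ := by
  simp only [hatQ, Set.mem_univ_pi, Set.mem_Icc]

lemma mem_unitCube {d : ℕ} {x : Fin d → ℝ} :
    x ∈ unitCube d ↔ ∀ i, 0 ≤ x i ∧ x i ≤ 1 := by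
  simp only [unitCube, Set.mem_univ_pi, Set.mem_Icc]

lemma pi_Icc_subset_coord {d : ℕ} {a b c e : Fin d → ℝ} (hab : ∀ i, a i ≤ b i)
    (h : Set.univ.pi (fun i => Set.Icc (a i) (b i)) ⊆ Set.univ.pi (fun i => Set.Icc (c i) (e i)))
    (i : Fin d) : c i ≤ a i ∧ b i ≤ e i := by
  have ha : a ∈ Set.univ.pi (fun i => Set.Icc (a i) (b i)) := by
    intro j _; exact Set.mem_Icc.mpr ⟨le_refl _, hab j⟩
  have hb : Function.update a i (b i) ∈ Set.univ.pi (fun i => Set.Icc (a i) (b i)) := by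
    intro j _
    rcases eq_or_ne j i with rfl | hj
    · rw [Function.update_self]; exact Set.mem_Icc.mpr ⟨hab j, le_refl _⟩
    · rw [Function.update_of_ne hj]; exact Set.mem_Icc.mpr ⟨le_refl _, hab j⟩
  have h1 := h ha i (Set.mem_univ i)
  have h2 := h hb i (Set.mem_univ i)
  rw [Function.update_self] at h2
  exact ⟨(Set.mem_Icc.mp h1).1, (Set.mem_Icc.mp h2).2⟩

lemma cell_subset_hatQ {d p : ℕ} {ℓ : ℤ} {m' k : Fin d → ℤ} :
    dyadicCell d ℓ m' ⊆ hatQ d p ℓ k ↔ ∀ i, k i - p ≤ m' i ∧ m' i ≤ k i + p := by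
  constructor
  · intro h i
    have hab : ∀ j, (m' j : ℝ) / 2 ^ ℓ ≤ ((m' j : ℝ) + 1) / 2 ^ ℓ := by
      intro j; rw [div_le_div_pow]; linarith
    have := pi_Icc_subset_coord hab h i
    rw [div_le_div_pow, div_le_div_pow] at this
    constructor
    · have := this.1
      have : ((k i - p : ℤ) : ℝ) ≤ ((m' i : ℤ) : ℝ) := by push_cast; linarith
      exact_mod_cast this
    · have h2 : ((m' i + 1 : ℤ) : ℝ) ≤ ((k i + p + 1 : ℤ) : ℝ) := by push_cast; linarith
      have h3 : (m' i + 1 : ℤ) ≤ (k i + p + 1 : ℤ) := by exact_mod_cast h2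
      omega
  · intro h
    apply Set.pi_mono
    intro i _
    apply Set.Icc_subset_Icc <;> rw [div_le_div_pow]
    · have := (h i).1
      have : ((k i - p : ℤ) : ℝ) ≤ ((m' i : ℤ) : ℝ) := by exact_mod_cast this
      push_cast at this ⊢; linarith
    · have := (h i).2
      have : ((m' i + 1 : ℤ) : ℝ) ≤ ((k i + p + 1 : ℤ) : ℝ) := by exact_mod_cast (by omega : m' i + 1 ≤ k i + p + 1)
      push_cast at this ⊢; linarith


lemma cast_ediv_le {j : ℤ} : ((j / 2 : ℤ) : ℝ) * 2 ≤ (j : ℝ) := by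
  have : 2 * (j / 2) ≤ j := by omega
  calc ((j / 2 : ℤ) : ℝ) * 2 = ((2 * (j / 2) : ℤ) : ℝ) := by push_cast; ring
  _ ≤ (j : ℝ) := by exact_mod_cast this

lemma le_cast_ediv {j : ℤ} : (j : ℝ) ≤ ((j / 2 : ℤ) : ℝ) * 2 + 1 := by
  have : j ≤ 2 * (j / 2) + 1 := by omega
  calc (j : ℝ) ≤ ((2 * (j / 2) + 1 : ℤ) : ℝ) := by exact_mod_cast this
  _ = ((j / 2 : ℤ) : ℝ) * 2 + 1 := by push_cast; ring

/-- if j ≤ x·2^ℓ ≤ j+1, then x lies in the level-(ℓ-1) cell of index j/2 -/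
lemma mem_parent_interval {x : ℝ} {ℓ : ℤ} {j : ℤ} (h1 : (j : ℝ) ≤ x * 2 ^ ℓ)
    (h2 : x * 2 ^ ℓ ≤ (j : ℝ) + 1) :
    ((j / 2 : ℤ) : ℝ) / 2 ^ (ℓ - 1) ≤ x ∧ x ≤ (((j / 2 : ℤ) : ℝ) + 1) / 2 ^ (ℓ - 1) := by
  have hc' := two_zpow_pos (ℓ - 1)
  have he : (2 : ℝ) ^ ℓ = 2 * 2 ^ (ℓ - 1) := zpow_succ_real ℓ
  have hca := cast_ediv_le (j := j)
  have hcb := le_cast_ediv (j := j)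
  have hX : x * 2 ^ ℓ = 2 * (x * 2 ^ (ℓ - 1)) := by rw [he]; ring
  rw [hX] at h1 h2
  constructor
  · rw [div_le_iff₀ hc']
    linarith
  · rw [le_div_iff₀ hc']
    linarith

lemma cell_subset_parent (d : ℕ) (ℓ : ℤ) (m : Fin d → ℤ) :
    dyadicCell d ℓ m ⊆ dyadicCell d (ℓ - 1) (fun i => m i / 2) := by
  intro x hx
  rw [mem_cell] at hx ⊢
  intro i
  have hc := two_zpow_pos ℓ
  obtain ⟨hl, hr⟩ := hx i
  have h1 : (m i : ℝ) ≤ x i * 2 ^ ℓ := by rw [div_le_iff₀ hc] at hl; linarith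
  have h2 : x i * 2 ^ ℓ ≤ (m i : ℝ) + 1 := by rw [le_div_iff₀ hc] at hr; linarith
  exact mem_parent_interval h1 h2

lemma cell_subset_unitCube_coord {d : ℕ} {ℓ : ℤ} {m : Fin d → ℤ}
    (h : dyadicCell d ℓ m ⊆ unitCube d) (i : Fin d) :
    (0 : ℝ) ≤ m i ∧ (m i : ℝ) + 1 ≤ 2 ^ ℓ := by
  have hab : ∀ j, (m j : ℝ) / 2 ^ ℓ ≤ ((m j : ℝ) + 1) / 2 ^ ℓ := by
    intro j; rw [div_le_div_pow]; linarith
  have := pi_Icc_subset_coord hab h i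
  have hc := two_zpow_pos ℓ
  constructor
  · have h1 := this.1
    have := (le_div_iff₀ hc).mp h1
    linarith
  · have h2 := this.2
    have := (div_le_one hc).mp h2
    linarith

lemma hatQ_subset_NQ (d p : ℕ) (ℓ : ℤ) (k : Fin d → ℤ) : hatQ d p ℓ k ⊆ NQ d p ℓ k := by
  intro x hx
  rw [mem_hatQ] at hx
  set m' : Fin d → ℤ := fun i => min ⌊x i * 2 ^ ℓ⌋ (k i + p) with hm'
  have key : ∀ i, (k i - p ≤ m' i ∧ m' i ≤ k i + p) ∧
      ((m' i : ℝ) ≤ x i * 2 ^ ℓ ∧ x i * 2 ^ ℓ ≤ (m' i : ℝ) + 1) := by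
    intro i
    obtain ⟨hl, hr⟩ := hx i
    have hc := two_zpow_pos ℓ
    have hl' : ((k i : ℝ) - p) ≤ x i * 2 ^ ℓ := by rw [div_le_iff₀ hc] at hl; linarith
    have hr' : x i * 2 ^ ℓ ≤ (k i : ℝ) + p + 1 := by rw [le_div_iff₀ hc] at hr; linarith
    have hfl : (k i - p : ℤ) ≤ ⌊x i * 2 ^ ℓ⌋ := by
      apply Int.le_floor.mpr; push_cast; linarith
    refine ⟨⟨le_min hfl (by omega), min_le_right _ _⟩, ?_, ?_⟩
    · have h1 : (m' i : ℝ) ≤ ((⌊x i * 2 ^ ℓ⌋ : ℤ) : ℝ) := by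
        exact_mod_cast min_le_left ⌊x i * 2 ^ ℓ⌋ (k i + p)
      exact h1.trans (Int.floor_le _)
    · rcases le_or_gt ⌊x i * 2 ^ ℓ⌋ (k i + p) with h | h
      · have he : m' i = ⌊x i * 2 ^ ℓ⌋ := min_eq_left h
        rw [he]
        have := Int.lt_floor_add_one (x i * 2 ^ ℓ)
        linarith
      · have he : m' i = k i + p := min_eq_right (by omega)
        rw [he]; push_cast; linarith
  have hsub : dyadicCell d ℓ m' ⊆ hatQ d p ℓ k := cell_subset_hatQ.mpr fun i => (key i).1
  have hmem : x ∈ dyadicCell d (ℓ - 1) (fun i => Int.ediv (m' i) 2) := by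
    rw [mem_cell]
    intro i
    exact mem_parent_interval (key i).2.1 (key i).2.2
  exact Set.mem_biUnion hsub hmem

/-- the center of a cell -/
def cellCenter (d : ℕ) (ℓ : ℤ) (m : Fin d → ℤ) : Fin d → ℝ :=
  fun i => ((m i : ℝ) + 2⁻¹) / 2 ^ ℓ

lemma cellCenter_mem (d : ℕ) (ℓ : ℤ) (m : Fin d → ℤ) :
    cellCenter d ℓ m ∈ dyadicCell d ℓ m := by
  rw [mem_cell]
  intro i
  constructor <;> rw [cellCenter, div_le_div_pow] <;> norm_num

lemma cellCenter_determines {d : ℕ} {ℓ : ℤ} {m m₀ : Fin d → ℤ}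
    (h : cellCenter d ℓ m ∈ dyadicCell d (ℓ - 1) m₀) : m₀ = fun i => m i / 2 := by
  rw [mem_cell] at h
  funext i
  obtain ⟨hl, hr⟩ := h i
  rw [cellCenter] at hl hr
  rw [div_pred_level, div_le_div_pow] at hl
  rw [show ((m₀ i : ℝ) + 1) / 2 ^ (ℓ - 1) = (2 * ((m₀ i : ℝ) + 1)) / 2 ^ ℓ from div_pred_level _ ℓ,
    div_le_div_pow] at hr
  have h1 : 2 * m₀ i ≤ m i := by
    have h' : ((2 * m₀ i : ℤ) : ℝ) < ((m i + 1 : ℤ) : ℝ) := by push_cast; linarith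
    have h'' : (2 * m₀ i : ℤ) < m i + 1 := by exact_mod_cast h'
    omega
  have h2 : m i ≤ 2 * m₀ i + 1 := by
    have h' : ((m i : ℤ) : ℝ) < ((2 * m₀ i + 2 : ℤ) : ℝ) := by push_cast; linarith
    have h'' : (m i : ℤ) < 2 * m₀ i + 2 := by exact_mod_cast h'
    omega
  omega


lemma NQ_inter_subset {d p : ℕ} {L : ℤ} {k : Fin d → ℤ}
    {Z : ℤ} (hZcast : (Z : ℝ) = 2 ^ (L - 1)) (hZpos : 0 < Z)
    (hk : ∀ i, 0 ≤ k i ∧ k i + 1 ≤ 2 * Z)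
    {S : Set (Fin d → ℤ)}
    (hhat : hatQ d p L k ∩ unitCube d ⊆ ⋃ s ∈ S, dyadicCell d (L - 1) s) :
    NQ d p L k ∩ unitCube d ⊆ ⋃ s ∈ S, dyadicCell d (L - 1) s := by
  rintro x ⟨hxN, hx0⟩
  rw [NQ, Set.mem_iUnion₂] at hxN
  obtain ⟨m', hm'sub, hxcell⟩ := hxN
  have hbk : ∀ i, k i - p ≤ m' i ∧ m' i ≤ k i + p := cell_subset_hatQ.mp hm'sub
  simp only [mem_cell] at hxcell
  rw [mem_unitCube] at hx0
  set c : ℝ := 2 ^ (L - 1) with hcdef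
  have hc : 0 < c := two_zpow_pos (L - 1)
  -- integer data
  set a : Fin d → ℤ := fun i => (k i - p) / 2 with ha
  set b : Fin d → ℤ := fun i => (k i + p) / 2 with hb
  set F : Fin d → ℤ := fun i => ⌊x i * c⌋ with hF
  set t : Fin d → ℤ := fun i => max (min (F i) (min (b i) (Z - 1))) (max (a i) 0) with ht
  -- basic real bounds per coordinate
  have hxc : ∀ i, (a i : ℝ) ≤ x i * c ∧ x i * c ≤ (b i : ℝ) + 1 := by
    intro i
    obtain ⟨hl, hr⟩ := hxcell i
    have hai : a i = (k i - (p:ℤ)) / 2 := rfl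
    have hbi : b i = (k i + (p:ℤ)) / 2 := rfl
    have hab : a i ≤ m' i / 2 ∧ m' i / 2 ≤ b i := by
      have := hbk i; omega
    constructor
    · rw [div_le_iff₀ hc] at hl
      calc (a i : ℝ) ≤ ((m' i / 2 : ℤ) : ℝ) := by exact_mod_cast hab.1
        _ ≤ x i * c := hl
    · rw [le_div_iff₀ hc] at hr
      calc x i * c ≤ ((m' i / 2 : ℤ) : ℝ) + 1 := hr
        _ ≤ (b i : ℝ) + 1 := by
            have : ((m' i / 2 : ℤ) : ℝ) ≤ (b i : ℝ) := by exact_mod_cast hab.2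
            linarith
  have hxc0 : ∀ i, 0 ≤ x i * c ∧ x i * c ≤ (Z : ℝ) := by
    intro i
    obtain ⟨h0, h1⟩ := hx0 i
    constructor
    · positivity
    · rw [hZcast]; nlinarith
  -- floor bounds
  have hFb : ∀ i, a i ≤ F i ∧ 0 ≤ F i ∧ F i ≤ b i + 1 ∧ F i ≤ Z := by
    intro i
    refine ⟨Int.le_floor.mpr (hxc i).1, Int.le_floor.mpr (by exact_mod_cast (hxc0 i).1), ?_, ?_⟩
    · have : F i ≤ ⌊((b i + 1 : ℤ) : ℝ)⌋ := Int.floor_le_floor (by push_cast; exact (hxc i).2)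
      rwa [Int.floor_intCast] at this
    · have : F i ≤ ⌊((Z : ℤ) : ℝ)⌋ := Int.floor_le_floor (hxc0 i).2
      rwa [Int.floor_intCast] at this
  -- t bounds
  have htb : ∀ i, a i ≤ t i ∧ t i ≤ b i ∧ 0 ≤ t i ∧ t i + 1 ≤ Z := by
    intro i
    have h1 := hFb i
    have h2 := hk i
    have h3 := hbk i
    have hai : a i = (k i - (p:ℤ)) / 2 := rfl
    have hbi : b i = (k i + (p:ℤ)) / 2 := rfl
    have hti : t i = max (min (F i) (min (b i) (Z - 1))) (max (a i) 0) := rfl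
    refine ⟨by omega, by omega, by omega, by omega⟩
  -- x lies in the level-(L-1) cell of index t
  have tlow : ∀ i, (t i : ℝ) ≤ x i * c := by
    intro i
    have hti : t i = max (min (F i) (min (b i) (Z - 1))) (max (a i) 0) := rfl
    have : t i ≤ F i ∨ t i ≤ a i ∨ t i ≤ 0 := by omega
    rcases this with h | h | h
    · exact (by exact_mod_cast h : (t i : ℝ) ≤ (F i : ℝ)).trans (Int.floor_le _)
    · exact (by exact_mod_cast h : (t i : ℝ) ≤ (a i : ℝ)).trans (hxc i).1
    · exact (by exact_mod_cast h : (t i : ℝ) ≤ 0).trans (hxc0 i).1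
  have thigh : ∀ i, x i * c ≤ (t i : ℝ) + 1 := by
    intro i
    have hti : t i = max (min (F i) (min (b i) (Z - 1))) (max (a i) 0) := rfl
    have h1 := hFb i
    have : F i ≤ t i ∨ b i + 1 ≤ t i + 1 ∨ Z ≤ t i + 1 := by omega
    rcases this with h | h | h
    · have := Int.lt_floor_add_one (x i * c)
      have hc2 : (F i : ℝ) ≤ (t i : ℝ) := by exact_mod_cast h
      linarith
    · have hc2 : (b i : ℝ) + 1 ≤ (t i : ℝ) + 1 := by
        have : ((b i + 1 : ℤ) : ℝ) ≤ ((t i + 1 : ℤ) : ℝ) := by exact_mod_cast h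
        push_cast at this; linarith
      linarith [(hxc i).2]
    · have hc2 : (Z : ℝ) ≤ (t i : ℝ) + 1 := by
        have : ((Z : ℤ) : ℝ) ≤ ((t i + 1 : ℤ) : ℝ) := by exact_mod_cast h
        push_cast at this; linarith
      linarith [(hxc0 i).2]
  -- the witness point y
  set U : Fin d → ℤ := fun i => max (2 * t i) (k i - p) with hU
  set V : Fin d → ℤ := fun i => min (2 * t i + 2) (k i + p + 1) with hV
  have hUV : ∀ i, U i < V i ∧ k i - p ≤ U i ∧ V i ≤ k i + p + 1 ∧
      2 * t i ≤ U i ∧ V i ≤ 2 * t i + 2 ∧ 0 ≤ U i ∧ V i ≤ 2 * Z := by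
    intro i
    have h1 := htb i
    have h2 := hk i
    have hai : a i = (k i - (p:ℤ)) / 2 := rfl
    have hbi : b i = (k i + (p:ℤ)) / 2 := rfl
    have hUi : U i = max (2 * t i) (k i - (p:ℤ)) := rfl
    have hVi : V i = min (2 * t i + 2) (k i + (p:ℤ) + 1) := rfl
    refine ⟨?_, ?_, ?_, ?_, ?_, ?_, ?_⟩ <;> omega
  set y : Fin d → ℝ := fun i => ((U i : ℝ) + (V i : ℝ)) / (2 * (2 * c)) with hy
  have hc2 : (0:ℝ) < 2 * c := by linarith
  have h2L : (2:ℝ) ^ L = 2 * c := zpow_succ_real L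
  have hyc : ∀ i, (U i : ℝ) < y i * (2 * c) ∧ y i * (2 * c) < (V i : ℝ) := by
    intro i
    have huv : (U i : ℝ) < (V i : ℝ) := by exact_mod_cast (hUV i).1
    have : y i * (2 * c) = ((U i : ℝ) + (V i : ℝ)) / 2 := by
      rw [hy]; field_simp
    rw [this]
    constructor <;> linarith
  have hyhat : y ∈ hatQ d p L k ∩ unitCube d := by
    constructor
    · rw [mem_hatQ]
      intro i
      have h1 := hyc i
      have h2 : ((k i - p : ℤ) : ℝ) ≤ (U i : ℝ) := by exact_mod_cast (hUV i).2.1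
      have h3 : (V i : ℝ) ≤ ((k i + p + 1 : ℤ) : ℝ) := by exact_mod_cast (hUV i).2.2.1
      push_cast at h2 h3
      rw [h2L]
      constructor
      · rw [div_le_iff₀ hc2]; linarith
      · rw [le_div_iff₀ hc2]; linarith
    · rw [mem_unitCube]
      intro i
      have h1 := hyc i
      have h2 : (0 : ℝ) ≤ (U i : ℝ) := by exact_mod_cast (hUV i).2.2.2.2.2.1
      have h3 : (V i : ℝ) ≤ 2 * (Z : ℝ) := by
        have h4 := (hUV i).2.2.2.2.2.2
        have h5 : ((V i : ℤ) : ℝ) ≤ ((2 * Z : ℤ) : ℝ) := by exact_mod_cast h4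
        push_cast at h5; linarith
      have hZc : (Z : ℝ) = c := hZcast
      rw [hZc] at h3
      have huv : (U i : ℝ) < (V i : ℝ) := by exact_mod_cast (hUV i).1
      constructor
      · have hy0 : (0:ℝ) ≤ (U i : ℝ) + (V i : ℝ) := by linarith
        rw [hy]
        exact div_nonneg hy0 (by positivity)
      · rw [hy]
        rw [div_le_one (by positivity)]
        linarith
  obtain ⟨s, hsS, hys⟩ := Set.mem_iUnion₂.mp (hhat hyhat)
  simp only [mem_cell] at hys
  have hst : s = t := by
    funext i
    obtain ⟨hl, hr⟩ := hys i
    rw [div_le_iff₀ hc] at hl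
    rw [le_div_iff₀ hc] at hr
    -- y i * c = (U+V)/4
    have hyc4 : y i * c = ((U i : ℝ) + (V i : ℝ)) / 4 := by
      rw [hy]; field_simp; ring
    have huv : (U i : ℝ) < (V i : ℝ) := by exact_mod_cast (hUV i).1
    have h2t : 2 * (t i : ℝ) ≤ (U i : ℝ) := by
      have : ((2 * t i : ℤ) : ℝ) ≤ ((U i : ℤ) : ℝ) := by exact_mod_cast (hUV i).2.2.2.1
      push_cast at this; linarith
    have h2t2 : (V i : ℝ) ≤ 2 * (t i : ℝ) + 2 := by
      have : ((V i : ℤ) : ℝ) ≤ ((2 * t i + 2 : ℤ) : ℝ) := by exact_mod_cast (hUV i).2.2.2.2.1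
      push_cast at this; linarith
    have hlow : (t i : ℝ) < y i * c := by rw [hyc4]; linarith
    have hhigh : y i * c < (t i : ℝ) + 1 := by rw [hyc4]; linarith
    have e1 : (s i : ℝ) < (t i : ℝ) + 1 := lt_of_le_of_lt hl hhigh
    have e2 : (t i : ℝ) < (s i : ℝ) + 1 := lt_of_lt_of_le hlow hr
    have e1' : s i < t i + 1 := by exact_mod_cast e1
    have e2' : t i < s i + 1 := by exact_mod_cast e2
    omega
  rw [Set.mem_iUnion₂]
  refine ⟨t, hst ▸ hsS, ?_⟩
  rw [mem_cell]
  intro i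
  constructor
  · rw [div_le_iff₀ hc]; exact tlow i
  · rw [le_div_iff₀ hc]; exact thigh i


lemma zpow_natCast_real (ℓ : ℕ) : (2:ℝ) ^ (ℓ : ℤ) = (((2:ℤ) ^ ℓ : ℤ) : ℝ) := by
  rw [zpow_natCast]; push_cast; ring

lemma cell_subset_unitCube_of {d : ℕ} {L : ℤ} {m : Fin d → ℤ}
    (h : ∀ i, 0 ≤ m i ∧ ((m i : ℝ) + 1) ≤ 2 ^ L) : dyadicCell d L m ⊆ unitCube d := by
  intro x hx
  rw [mem_cell] at hx
  rw [mem_unitCube]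
  intro i
  have hc := two_zpow_pos L
  obtain ⟨h0, h1⟩ := h i
  obtain ⟨hl, hr⟩ := hx i
  constructor
  · exact le_trans (div_nonneg (by exact_mod_cast h0) hc.le) hl
  · exact hr.trans ((div_le_one hc).mpr h1)


/-- (First WAHM characterization.) A hierarchical mesh is weakly
admissible (`ω_ℓ ⊆ ω_{ℓ-1}` for all `ℓ = 1, …, n-1`) if and only if for every level-`ℓ`
cell `Q` of the mesh with `Q ⊆ ω_ℓ` one has `N_{parent Q} ∩ Ω₀ ⊆ Ω_{ℓ-1}`. -/
theorem weakly_admissible_iff_parent_neighborhood (d p n : ℕ) (hp : 1 ≤ p)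
    (Ω : ℕ → Set (Fin d → ℝ))
    (hΩ0 : Ω 0 = unitCube d)
    (hnest : ∀ ℓ, Ω (ℓ + 1) ⊆ Ω ℓ)
    (hΩn : Ω n = ∅)
    (hcells : ∀ ℓ : ℕ, 1 ≤ ℓ → ℓ ≤ n - 1 →
      ∃ S : Set (Fin d → ℤ), Ω ℓ = ⋃ m ∈ S, dyadicCell d ((ℓ : ℤ) - 1) m) :
    (∀ ℓ : ℕ, 1 ≤ ℓ → ℓ ≤ n - 1 → omegaSet d p Ω ℓ ⊆ omegaSet d p Ω (ℓ - 1)) ↔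
      (∀ ℓ : ℕ, 1 ≤ ℓ → ℓ ≤ n - 1 → ∀ m : Fin d → ℤ,
        dyadicCell d (ℓ : ℤ) m ⊆ Ω 0 →
        dyadicCell d (ℓ : ℤ) m ⊆ omegaSet d p Ω ℓ →
        NQ d p ((ℓ : ℤ) - 1) (fun i => Int.ediv (m i) 2) ∩ Ω 0 ⊆ Ω (ℓ - 1)) := by
  constructor
  · -- weak admissibility → parent neighborhood condition
    intro hadm ℓ h1 h2 m hmΩ0 hmω
    rcases Nat.lt_or_ge ℓ 2 with hl2 | hl2
    · -- ℓ = 1 : the conclusion is trivial since Ω (1-1) = Ω 0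
      have hℓ1 : ℓ = 1 := by omega
      subst hℓ1
      exact fun x hx => hx.2
    · have hcast : ((ℓ - 1 : ℕ) : ℤ) = (ℓ : ℤ) - 1 := by omega
      have hsub : dyadicCell d (ℓ : ℤ) m ⊆ omegaSet d p Ω (ℓ - 1) :=
        hmω.trans (hadm ℓ h1 h2)
      have hcent := hsub (cellCenter_mem d (ℓ : ℤ) m)
      rw [omegaSet, Set.mem_iUnion₂] at hcent
      obtain ⟨m₀, hm₀, hcmem⟩ := hcent
      simp only [Set.mem_setOf_eq] at hm₀
      rw [hcast] at hcmem hm₀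
      have hm₀eq : m₀ = fun i => m i / 2 := cellCenter_determines hcmem
      subst hm₀eq
      have hhat := hm₀.2
      -- Ω (ℓ-1) as a union of level-(ℓ-2) cells
      obtain ⟨S, hS⟩ := hcells (ℓ - 1) (by omega) (by omega)
      rw [hcast] at hS
      -- integer bounds for the parent index
      rw [hΩ0] at hmΩ0
      have hbounds := cell_subset_unitCube_coord hmΩ0
      have hpow : (2:ℝ) ^ (ℓ : ℤ) = (((2:ℤ) ^ ℓ : ℤ) : ℝ) := zpow_natCast_real ℓ
      have hfour : (2:ℤ) ^ ℓ = 2 ^ (ℓ - 2) * 4 := by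
        obtain ⟨j, hj⟩ : ∃ j, ℓ = j + 2 := ⟨ℓ - 2, by omega⟩
        subst hj
        norm_num [pow_add, Nat.add_sub_cancel]
      have hk : ∀ i, 0 ≤ m i / 2 ∧ m i / 2 + 1 ≤ 2 * (2:ℤ) ^ (ℓ - 2) := by
        intro i
        obtain ⟨hb0, hb1⟩ := hbounds i
        have h0 : (0 : ℤ) ≤ m i := by exact_mod_cast hb0
        have h1' : ((m i + 1 : ℤ) : ℝ) ≤ (((2:ℤ) ^ ℓ : ℤ) : ℝ) := by
          rw [← hpow]; push_cast; linarith
        have h1 : m i + 1 ≤ (2:ℤ) ^ ℓ := by exact_mod_cast h1'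
        rw [hfour] at h1
        omega
      have hZcast : (((2:ℤ) ^ (ℓ - 2) : ℤ) : ℝ) = 2 ^ ((ℓ : ℤ) - 1 - 1) := by
        rw [show (ℓ : ℤ) - 1 - 1 = ((ℓ - 2 : ℕ) : ℤ) by omega, zpow_natCast]
        push_cast; ring
      have hZpos : (0:ℤ) < 2 ^ (ℓ - 2) := pow_pos (by norm_num) _
      rw [hΩ0, hS] at hhat ⊢
      exact NQ_inter_subset hZcast hZpos hk hhat
  · -- parent neighborhood condition → weak admissibility
    intro hrhs ℓ h1 h2 x hx
    rw [omegaSet, Set.mem_iUnion₂] at hx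
    obtain ⟨m, hm, hxm⟩ := hx
    simp only [Set.mem_setOf_eq] at hm
    obtain ⟨hmΩ0, hmhat⟩ := hm
    have hcellω : dyadicCell d (ℓ : ℤ) m ⊆ omegaSet d p Ω ℓ := by
      rw [omegaSet]
      exact Set.subset_biUnion_of_mem (u := fun m => dyadicCell d (ℓ : ℤ) m)
        (Set.mem_setOf_eq ▸ ⟨hmΩ0, hmhat⟩)
    have hN := hrhs ℓ h1 h2 m hmΩ0 hcellω
    have hcast : ((ℓ - 1 : ℕ) : ℤ) = (ℓ : ℤ) - 1 := by omega
    rw [omegaSet, Set.mem_iUnion₂]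
    refine ⟨fun i => m i / 2, ?_, ?_⟩
    · rw [Set.mem_setOf_eq, hcast]
      constructor
      · -- the parent cell is inside the unit cube
        rw [hΩ0]
        rw [hΩ0] at hmΩ0
        have hbounds := cell_subset_unitCube_coord hmΩ0
        apply cell_subset_unitCube_of
        intro i
        obtain ⟨hb0, hb1⟩ := hbounds i
        have h0 : (0 : ℤ) ≤ m i := by exact_mod_cast hb0
        have hpow : (2:ℝ) ^ (ℓ : ℤ) = (((2:ℤ) ^ ℓ : ℤ) : ℝ) := zpow_natCast_real ℓ
        have htwo : (2:ℤ) ^ ℓ = 2 ^ (ℓ - 1) * 2 := by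
          obtain ⟨j, hj⟩ : ∃ j, ℓ = j + 1 := ⟨ℓ - 1, by omega⟩
          subst hj
          norm_num [pow_add, Nat.add_sub_cancel]
        have h1' : ((m i + 1 : ℤ) : ℝ) ≤ (((2:ℤ) ^ ℓ : ℤ) : ℝ) := by
          rw [← hpow]; push_cast; linarith
        have h1 : m i + 1 ≤ (2:ℤ) ^ ℓ := by exact_mod_cast h1'
        rw [htwo] at h1
        have hdiv : 0 ≤ m i / 2 ∧ m i / 2 + 1 ≤ (2:ℤ) ^ (ℓ - 1) := by omega
        refine ⟨hdiv.1, ?_⟩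
        have : ((m i / 2 + 1 : ℤ) : ℝ) ≤ (((2:ℤ) ^ (ℓ - 1) : ℤ) : ℝ) := by
          exact_mod_cast hdiv.2
        have hZ : (((2:ℤ) ^ (ℓ - 1) : ℤ) : ℝ) = (2:ℝ) ^ ((ℓ : ℤ) - 1) := by
          rw [show (ℓ : ℤ) - 1 = ((ℓ - 1 : ℕ) : ℤ) by omega, zpow_natCast]
          push_cast; ring
        rw [hZ] at this
        push_cast at this ⊢
        linarith
      · -- the local support extension condition for the parent
        exact (Set.inter_subset_inter_left (Ω 0) (hatQ_subset_NQ d p ((ℓ:ℤ) - 1)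
          (fun i => m i / 2))).trans hN
    · rw [hcast]
      exact cell_subset_parent d (ℓ : ℤ) m hxm
end
end
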